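/- In a 4-dimensional perfect fluid spacetime with constant scalar curvature R in f(R)-gravity, tracing the field equation yields −R = κ²(3p − σ)/f_R(R) + 2(f(R) − R f_R(R))/f_R(R), and consequently in the dark matter era (p + σ = 0) the Ricci tensor is proportional to the metric: S = ((2κ²p + f(R))/(2 f_R(R))) g, i.e., the spacetime is Einstein. -/

import Mathlib

/-! Substituting the perfect-fluid tensor into the field equation writes `S` as
`a g + b B ⊗ B` with `b = κ²(σ + p)/f_R`. Tracing with `tr g = 4`, `tr (B ⊗ B) = -1` gives
`R = 4a - b`, which is the first identity; when `σ + p = 0` the `B ⊗ B` term drops out. -/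

section FieldEquation

variable {V : Type*} {g S : V → V → ℝ} {B : V → ℝ} {κ f fR p σ R : ℝ}

theorem ricci_eq_of_perfectFluid_field_eq
    (hfield : ∀ X Y, S X Y - R / 2 * g X Y
        = κ ^ 2 / fR * ((σ + p) * (B X * B Y) + p * g X Y) + (f - R * fR) / (2 * fR) * g X Y) :
    S = (R / 2 + κ ^ 2 * p / fR + (f - R * fR) / (2 * fR)) • g
      + (κ ^ 2 * (σ + p) / fR) • fun X Y => B X * B Y := by
  funext X Y
  simp only [Pi.add_apply, Pi.smul_apply, smul_eq_mul]
  linear_combination hfield X Y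

theorem ricci_eq_smul_of_perfectFluid_field_eq_of_add_eq_zero (hfR : fR ≠ 0) (hdm : σ + p = 0)
    (hfield : ∀ X Y, S X Y - R / 2 * g X Y
        = κ ^ 2 / fR * ((σ + p) * (B X * B Y) + p * g X Y) + (f - R * fR) / (2 * fR) * g X Y) :
    S = ((2 * κ ^ 2 * p + f) / (2 * fR)) • g := by
  rw [ricci_eq_of_perfectFluid_field_eq hfield, hdm]
  funext X Y
  simp only [Pi.add_apply, Pi.smul_apply, smul_eq_mul]
  field_simp
  ring

end FieldEquation

theorem dark_matter_era_einstein_general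
    {V : Type*} [AddCommGroup V] [Module ℝ V]
    (g S T : V → V → ℝ) (B : V → ℝ) (κ f fR p σ R : ℝ)
    (tr : (V → V → ℝ) →ₗ[ℝ] ℝ)
    (hfR : fR ≠ 0)
    (hT : T = fun X Y => (σ + p) * (B X * B Y) + p * g X Y)
    (hfield : ∀ X Y, S X Y - R / 2 * g X Y
        = κ ^ 2 / fR * T X Y + (f - R * fR) / (2 * fR) * g X Y)
    (htrg : tr g = 4)
    (htrBB : tr (fun X Y => B X * B Y) = -1)
    (htrS : tr S = R) :
    (-R = κ ^ 2 * (3 * p - σ) / fR + 2 * (f - R * fR) / fR)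
      ∧ (p + σ = 0 → ∀ X Y, S X Y = (2 * κ ^ 2 * p + f) / (2 * fR) * g X Y) := by
  subst hT
  refine ⟨?_, fun hdm X Y => ?_⟩
  · have htrace := congrArg tr (ricci_eq_of_perfectFluid_field_eq hfield)
    rw [htrS, map_add, map_smul, map_smul, htrg, htrBB, smul_eq_mul, smul_eq_mul] at htrace
    linear_combination htrace
  · rw [ricci_eq_smul_of_perfectFluid_field_eq_of_add_eq_zero hfR (by linarith) hfield]
    rfl

/-- In a 4-dimensional perfect fluid spacetime with constant scalar
curvature `R` in f(R)-gravity, tracing the field equation yields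
`−R = κ²(3p − σ)/f_R(R) + 2(f(R) − R f_R(R))/f_R(R)`, and consequently in the dark
matter era (`p + σ = 0`) the Ricci tensor is proportional to the metric:
`S = ((2κ²p + f(R))/(2 f_R(R))) g`, i.e. the spacetime is Einstein. -/
theorem dark_matter_era_einstein
    {V : Type*} [AddCommGroup V] [Module ℝ V]
    (g S T : V → V → ℝ) (ρ : V) (B : V → ℝ) (κ f fR p σ R : ℝ)
    (tr : (V → V → ℝ) →ₗ[ℝ] ℝ)
    (hB : ∀ X, B X = g X ρ)
    (hρ : g ρ ρ = -1)
    (hfR : fR ≠ 0)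
    (hT : T = fun X Y => (σ + p) * (B X * B Y) + p * g X Y)
    (hfield : ∀ X Y, S X Y - R / 2 * g X Y
        = κ ^ 2 / fR * T X Y + (f - R * fR) / (2 * fR) * g X Y)
    (htrg : tr g = 4)
    (htrBB : tr (fun X Y => B X * B Y) = -1)
    (htrS : tr S = R) :
    (-R = κ ^ 2 * (3 * p - σ) / fR + 2 * (f - R * fR) / fR)
      ∧ (p + σ = 0 → ∀ X Y, S X Y = (2 * κ ^ 2 * p + f) / (2 * fR) * g X Y) :=
  dark_matter_era_einstein_general g S T B κ f fR p σ R tr hfR hT hfield htrg htrBB htrS
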